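/- If A is a finite, atomic, qualitatively representable non-associative relation algebra with n atoms, then A has a qualitative representation over a base of size at most 3n³. -/

import Mathlib

/-- A non-associative relation algebra: a boolean algebra with normal additive
involuted-monoid operators satisfying the Peircean law. -/
class NAAlg (α : Type*) extends BooleanAlgebra α where
  comp : α → α → α
  conv : α → α
  ident : α
  comp_ident : ∀ x : α, comp x ident = x
  ident_comp : ∀ x : α, comp ident x = x
  conv_conv : ∀ x : α, conv (conv x) = x
  conv_comp : ∀ x y : α, conv (comp x y) = comp (conv y) (conv x)
  conv_bot : conv ⊥ = ⊥
  comp_bot : ∀ x : α, comp x ⊥ = ⊥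
  conv_sup : ∀ x y : α, conv (x ⊔ y) = conv x ⊔ conv y
  comp_sup : ∀ x y z : α, comp x (y ⊔ z) = comp x y ⊔ comp x z
  peirce : ∀ x y z : α, comp x y ⊓ conv z = ⊥ ↔ comp y z ⊓ conv x = ⊥

/-- Composition of binary relations. -/
def rcomp {D : Type*} (r s : Set (D × D)) : Set (D × D) :=
  {p | ∃ z, (p.1, z) ∈ r ∧ (z, p.2) ∈ s}

/-- A qualitative representation of a non-associative relation algebra. -/
structure IsQualRep {α D : Type*} [NAAlg α] (φ : α → Set (D × D)) : Prop where
  map_bot : φ ⊥ = ∅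
  map_top : φ ⊤ = Set.univ
  map_sup : ∀ a b : α, φ (a ⊔ b) = φ a ∪ φ b
  map_compl : ∀ a : α, φ aᶜ = Set.univ \ φ a
  map_ident : φ NAAlg.ident = {p : D × D | p.1 = p.2}
  map_conv : ∀ a : α, φ (NAAlg.conv a) = {p : D × D | (p.2, p.1) ∈ φ a}
  qual : ∀ a b c : α, rcomp (φ a) (φ b) ⊆ φ c ↔ NAAlg.comp a b ≤ c


/-!
Fix a qualitative representation `φ` on a base `D`. For every consistent triple of atoms
`(a, b, c)`, i.e. `a ; b ⊓ c ≠ ⊥`, choose three points `x y z` with `(x, y) ∈ φ a`,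
`(y, z) ∈ φ b` and `(x, z) ∈ φ c`; there are at most `n³` such triples, so at most `3 n³` such
points. Restricting `φ` to the chosen points preserves the boolean operations, the identity and
the converse, and composition can only shrink, so `a ; b ≤ c` still implies the inclusion. For the
converse, if `a ; b ≰ c`, then `a ; b ⊓ cᶜ` lies above an atom `e`, and finiteness yields atoms
`a' ≤ a`, `b' ≤ b` with `a' ; b' ⊓ e ≠ ⊥`: the witnesses of `(a', b', e)` were kept and violate
the inclusion. Injectivity is automatic, since `φ a ⊆ φ b ↔ a ; 1' ≤ b`.
-/

open NAAlg

theorem SupBotHom.exists_atom_le_inf_ne_bot {α β : Type*} [GeneralizedBooleanAlgebra α]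
    [WellFoundedLT α] [DistribLattice β] [OrderBot β] (f : SupBotHom α β) (c : β) (a : α)
    (ha : f a ⊓ c ≠ ⊥) : ∃ a', IsAtom a' ∧ a' ≤ a ∧ f a' ⊓ c ≠ ⊥ := by
  induction a using WellFoundedLT.induction with | _ a ih
  by_cases hatom : IsAtom a
  · exact ⟨a, hatom, le_rfl, ha⟩
  have ha_ne : a ≠ ⊥ := by rintro rfl; simp at ha
  obtain ⟨y, hya, hy⟩ : ∃ y < a, y ≠ ⊥ := by
    simpa [IsAtom, ha_ne] using hatom
  have hsplit : f a ⊓ c = (f y ⊓ c) ⊔ (f (a \ y) ⊓ c) := by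
    rw [← inf_sup_right, ← map_sup, sup_sdiff_cancel_right hya.le]
  by_cases hyc : f y ⊓ c = ⊥
  · obtain ⟨a', ha', hle, hne⟩ :=
      ih (a \ y) (sdiff_lt hya.le hy) (by simpa [hsplit, hyc] using ha)
    exact ⟨a', ha', hle.trans sdiff_le, hne⟩
  · obtain ⟨a', ha', hle, hne⟩ := ih y hya hyc
    exact ⟨a', ha', hle.trans hya.le, hne⟩

namespace NAAlg

variable {α : Type*} [NAAlg α]

theorem comp_eq_conv_comp_conv (a b : α) : comp a b = conv (comp (conv b) (conv a)) := by
  rw [conv_comp, conv_conv, conv_conv]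

theorem comp_sup_left (a b c : α) : comp (a ⊔ b) c = comp a c ⊔ comp b c := by
  rw [comp_eq_conv_comp_conv, conv_sup, comp_sup, conv_sup, ← comp_eq_conv_comp_conv,
    ← comp_eq_conv_comp_conv]

theorem bot_comp (a : α) : comp ⊥ a = ⊥ := by
  rw [comp_eq_conv_comp_conv, conv_bot, comp_bot, conv_bot]

def compLeft (a : α) : SupBotHom α α where
  toFun := comp a
  map_sup' := comp_sup a
  map_bot' := comp_bot a

def compRight (b : α) : SupBotHom α α where
  toFun a := comp a b
  map_sup' a a' := comp_sup_left a a' b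
  map_bot' := bot_comp b

theorem exists_atoms_le_comp_inf_ne_bot [Finite α] {a b c : α} (h : comp a b ⊓ c ≠ ⊥) :
    ∃ a' b', IsAtom a' ∧ IsAtom b' ∧ a' ≤ a ∧ b' ≤ b ∧ comp a' b' ⊓ c ≠ ⊥ := by
  obtain ⟨a', ha', haa', h'⟩ := (compRight b).exists_atom_le_inf_ne_bot c a h
  obtain ⟨b', hb', hbb', h''⟩ := (compLeft a').exists_atom_le_inf_ne_bot c b h'
  exact ⟨a', b', ha', hb', haa', hbb', h''⟩

end NAAlg

theorem rcomp_diag_right {D : Type*} (r : Set (D × D)) : rcomp r {p | p.1 = p.2} = r := by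
  ext ⟨x, y⟩
  simp [rcomp]

def restrictBase {α D : Type*} (φ : α → Set (D × D)) (S : Set D) : α → Set (S × S) :=
  fun a => Prod.map (↑) (↑) ⁻¹' φ a

def KeepsWitnesses {α D : Type*} [NAAlg α] (φ : α → Set (D × D)) (S : Set D) : Prop :=
  ∀ a b c : α, IsAtom a → IsAtom b → IsAtom c → comp a b ⊓ c ≠ ⊥ →
    ∃ x ∈ S, ∃ y ∈ S, ∃ z ∈ S, (x, y) ∈ φ a ∧ (y, z) ∈ φ b ∧ (x, z) ∈ φ c

namespace IsQualRep

variable {α D : Type*} [NAAlg α] {φ : α → Set (D × D)}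

theorem subset_iff (hφ : IsQualRep φ) {a b : α} : φ a ⊆ φ b ↔ a ≤ b := by
  have h := hφ.qual a ident b
  rwa [hφ.map_ident, rcomp_diag_right, comp_ident] at h

theorem injective (hφ : IsQualRep φ) : Function.Injective φ := fun _ _ h =>
  le_antisymm (hφ.subset_iff.1 h.le) (hφ.subset_iff.1 h.ge)

theorem exists_witness (hφ : IsQualRep φ) {a b c : α} (h : comp a b ⊓ c ≠ ⊥) :
    ∃ x y z, (x, y) ∈ φ a ∧ (y, z) ∈ φ b ∧ (x, z) ∈ φ c := by
  have hnot : ¬ rcomp (φ a) (φ b) ⊆ φ cᶜ := by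
    rwa [hφ.qual, le_compl_iff_disjoint_right, disjoint_iff]
  obtain ⟨⟨x, z⟩, ⟨y, hxy, hyz⟩, hxz⟩ := Set.not_subset.1 hnot
  refine ⟨x, y, z, hxy, hyz, ?_⟩
  simpa [hφ.map_compl] using hxz

theorem restrict [Finite α] (hφ : IsQualRep φ) {S : Set D} (hS : KeepsWitnesses φ S) :
    IsQualRep (restrictBase φ S) where
  map_bot := by simp [restrictBase, hφ.map_bot]
  map_top := by simp [restrictBase, hφ.map_top]
  map_sup a b := by simp [restrictBase, hφ.map_sup]
  map_compl a := by ext; simp [restrictBase, hφ.map_compl]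
  map_ident := by ext; simp [restrictBase, hφ.map_ident, Subtype.ext_iff]
  map_conv a := by ext; simp [restrictBase, hφ.map_conv]
  qual a b c := by
    refine ⟨fun hsub => ?_, fun hle _ ⟨z, hxz, hzy⟩ => (hφ.qual a b c).2 hle ⟨z, hxz, hzy⟩⟩
    by_contra hnle
    obtain ⟨e, he, hle⟩ := (eq_bot_or_exists_atom_le (comp a b ⊓ cᶜ)).resolve_left
      (by rwa [← sdiff_eq, sdiff_eq_bot_iff])
    have hab_e : comp a b ⊓ e ≠ ⊥ := by
      rw [inf_eq_right.2 (hle.trans inf_le_left)]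
      exact he.ne_bot
    obtain ⟨a', b', ha', hb', haa', hbb', hne⟩ := exists_atoms_le_comp_inf_ne_bot hab_e
    obtain ⟨x, hx, y, hy, z, hz, hxy, hyz, hxz⟩ := hS a' b' e ha' hb' he hne
    have hc : (x, z) ∈ φ c :=
      hsub (a := (⟨x, hx⟩, ⟨z, hz⟩))
        ⟨⟨y, hy⟩, hφ.subset_iff.2 haa' hxy, hφ.subset_iff.2 hbb' hyz⟩
    have hcc : (x, z) ∈ φ cᶜ := hφ.subset_iff.2 (hle.trans inf_le_right) hxz
    simp [hφ.map_compl, hc] at hcc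

theorem exists_keepsWitnesses [Finite α] (hφ : IsQualRep φ) :
    ∃ S : Set D, Finite S ∧ Nat.card S ≤ 3 * Nat.card {x : α // IsAtom x} ^ 3 ∧
      KeepsWitnesses φ S := by
  let A := {x : α // IsAtom x}
  let T := {t : A × A × A // comp t.1.1 t.2.1.1 ⊓ t.2.2.1 ≠ ⊥}
  choose x y z hw using fun t : T => hφ.exists_witness t.2
  let w : T × Fin 3 → D := fun p => ![x p.1, y p.1, z p.1] p.2
  refine ⟨Set.range w, inferInstance, ?_, ?_⟩
  · calc Nat.card (Set.range w) ≤ Nat.card (T × Fin 3) := Finite.card_range_le w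
      _ ≤ Nat.card (A × A × A) * 3 := by
        rw [Nat.card_prod, Nat.card_fin]
        exact Nat.mul_le_mul_right 3 (Finite.card_subtype_le _)
      _ = 3 * Nat.card A ^ 3 := by simp only [Nat.card_prod]; ring
  · intro a b c ha hb hc h
    let t : T := ⟨(⟨a, ha⟩, ⟨b, hb⟩, ⟨c, hc⟩), h⟩
    exact ⟨x t, ⟨(t, 0), rfl⟩, y t, ⟨(t, 1), rfl⟩, z t, ⟨(t, 2), rfl⟩, hw t⟩

end IsQualRep

theorem stmt12_general {α : Type} [NAAlg α] [Fintype α]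
    (hrep : ∃ (D : Type) (φ : α → Set (D × D)), Function.Injective φ ∧ IsQualRep φ) :
    ∃ (D : Type) (_ : Fintype D) (φ : α → Set (D × D)),
      Nat.card D ≤ 3 * (Nat.card {x : α // IsAtom x}) ^ 3 ∧
      Function.Injective φ ∧ IsQualRep φ := by
  obtain ⟨D, φ, -, hφ⟩ := hrep
  obtain ⟨S, _, hcard, hS⟩ := hφ.exists_keepsWitnesses
  have hψ := hφ.restrict hS
  exact ⟨S, Fintype.ofFinite S, restrictBase φ S, hcard, hψ.injective, hψ⟩

theorem stmt12 {α : Type} [NAAlg α] [Fintype α] [IsAtomic α]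
    (hrep : ∃ (D : Type) (φ : α → Set (D × D)), Function.Injective φ ∧ IsQualRep φ) :
    ∃ (D : Type) (_ : Fintype D) (φ : α → Set (D × D)),
      Nat.card D ≤ 3 * (Nat.card {x : α // IsAtom x}) ^ 3 ∧
      Function.Injective φ ∧ IsQualRep φ :=
  stmt12_general hrep
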